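/- Let (Ṽ_i)_{i≥1} = ((Ṽ_i^{(1)}, Ṽ_i^{(2)}))_{i≥1} be a second i.i.d. family of [0,∞)²-valued random vectors, also independent of (T_i)_{i≥1} and of (G_t)_{t≥0}, and assume that (V^{(1)}, V^{(2)}) is smaller than (Ṽ^{(1)}, Ṽ^{(2)}) in the lower orthant order, i.e. P(V^{(1)} ≤ x₁, V^{(2)} ≤ x₂) ≤ P(Ṽ^{(1)} ≤ x₁, Ṽ^{(2)} ≤ x₂) for all x₁, x₂ ∈ ℝ, and the equivalent survival form P(V^{(1)} > x₁, V^{(2)} > x₂) ≤ P(Ṽ^{(1)} > x₁, Ṽ^{(2)} > x₂) for all x₁, x₂ ∈ ℝ. Then, letting φ̃_t(L) be the functional built with (Ṽ_i)_{i≥1} in place of (V_i)_{i≥1}, one has φ_t(L) ≤ φ̃_t(L) for all t ≥ 0 and all L ≥ 0; consequently the corresponding system lifetimes satisfy τ ≤_st τ̃ (the reliabilities satisfy e^{−H(t)} φ_t(L) ≤ e^{−H(t)} φ̃_t(L) for all t). -/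

import Mathlib

open MeasureTheory ProbabilityTheory Filter

noncomputable section

/-- Number of points of the family `T` lying in `(-∞, t]`
(the counting process `N_t = Σ_{i≥1} 1_{T_i ≤ t}`). -/
def countPts {Ω : Type*} (T : ℕ → Ω → ℝ) (t : ℝ) (ω : Ω) : ℕ :=
  Set.ncard {i : ℕ | T i ω ≤ t}

/-- Cumulative distribution function of a random variable `X` under `P`. -/
def cdfRV {Ω : Type*} [MeasurableSpace Ω] (P : Measure Ω) (X : Ω → ℝ) (x : ℝ) : ℝ :=
  (P {ω | X ω ≤ x}).toReal

/-- `T` enumerates the points `0 < T 0 < T 1 < ⋯ → ∞` of a non-homogeneous Poisson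
process with cumulated intensity `Λ`: the counting process has independent increments,
with `N_t - N_s` Poisson distributed with mean `Λ t - Λ s` for `0 ≤ s ≤ t`. -/
structure IsPoissonProcess {Ω : Type*} [MeasurableSpace Ω] (P : Measure Ω)
    (T : ℕ → Ω → ℝ) (Λ : ℝ → ℝ) : Prop where
  meas : ∀ i, Measurable (T i)
  pos : ∀ᵐ ω ∂P, 0 < T 0 ω
  strictMono : ∀ᵐ ω ∂P, StrictMono fun i => T i ω
  tendsto_atTop : ∀ᵐ ω ∂P, Tendsto (fun i => T i ω) atTop atTop
  indepIncrements : ∀ (n : ℕ) (t : Fin (n + 1) → ℝ), Monotone t → (∀ i, 0 ≤ t i) →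
    iIndepFun
      (fun i : Fin n => fun ω => countPts T (t i.succ) ω - countPts T (t i.castSucc) ω) P
  poissonLaw : ∀ s t : ℝ, 0 ≤ s → s ≤ t → ∀ k : ℕ,
    P {ω | countPts T t ω - countPts T s ω = k}
      = ENNReal.ofReal (Real.exp (-(Λ t - Λ s)) * (Λ t - Λ s) ^ k / Nat.factorial k)

/-- The shock model: `lam` is a nonnegative, measurable, locally integrable intensity
with cumulated intensity `Λ t = ∫_0^t lam`, positive for `t > 0`; `T` is a Poisson process
with cumulated intensity `Λ`; `(V i) = ((V i).1, (V i).2)` is an i.i.d. family of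
`[0,∞)²`-valued shock increments with common law `μ`, independent of `T`;
`q : [0,∞) → [0,1]` is measurable; and for each `t ≥ 0`, `G t` is a nonnegative random
variable independent of `((T i), (V i))`. -/
structure ShockModel {Ω : Type*} [MeasurableSpace Ω] (P : Measure Ω)
    (lam Λ : ℝ → ℝ) (T : ℕ → Ω → ℝ) (V : ℕ → Ω → ℝ × ℝ)
    (μ : Measure (ℝ × ℝ)) (q : ℝ → ℝ) (G : ℝ → Ω → ℝ) : Prop where
  prob : IsProbabilityMeasure P
  lam_meas : Measurable lam
  lam_nonneg : ∀ x, 0 ≤ lam x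
  lam_locInt : ∀ t : ℝ, 0 ≤ t → IntervalIntegrable lam volume 0 t
  Lam_def : ∀ t : ℝ, Λ t = ∫ x in (0:ℝ)..t, lam x
  Lam_pos : ∀ t : ℝ, 0 < t → 0 < Λ t
  poisson : IsPoissonProcess P T Λ
  V_meas : ∀ i, Measurable (V i)
  V_nonneg : ∀ i, ∀ᵐ ω ∂P, 0 ≤ (V i ω).1 ∧ 0 ≤ (V i ω).2
  V_law : ∀ i, Measure.map (V i) P = μ
  V_iIndep : iIndepFun V P
  V_T_indep : IndepFun (fun ω i => V i ω) (fun ω i => T i ω) P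
  q_meas : Measurable q
  q_mem : ∀ x, q x ∈ Set.Icc (0 : ℝ) 1
  G_meas : ∀ t, Measurable (G t)
  G_nonneg : ∀ t : ℝ, 0 ≤ t → ∀ᵐ ω ∂P, 0 ≤ G t ω
  G_indep : ∀ t, IndepFun (G t) (fun ω i => (T i ω, V i ω)) P

/-- The functional
`φ_t(L) = E[ F_{G_t}(L − Σ_{i=1}^{N_t} V_i⁽²⁾) · exp(−Σ_{i=1}^{N_t} V_i⁽¹⁾ (t−T_i)) · Π_{i=1}^{N_t} q(T_i) ]`. -/
def phi {Ω : Type*} [MeasurableSpace Ω] (P : Measure Ω)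
    (T : ℕ → Ω → ℝ) (V : ℕ → Ω → ℝ × ℝ) (q : ℝ → ℝ) (G : ℝ → Ω → ℝ)
    (t L : ℝ) : ℝ :=
  ∫ ω, cdfRV P (G t) (L - ∑ i ∈ Finset.range (countPts T t ω), (V i ω).2)
      * Real.exp (- ∑ i ∈ Finset.range (countPts T t ω), (V i ω).1 * (t - T i ω))
      * ∏ i ∈ Finset.range (countPts T t ω), q (T i ω) ∂P

/-- The Laplace transform `μ̃₁(s) = E[exp(−s V⁽¹⁾)]` of the first marginal of the
shock increment distribution. -/
def laplace1 {Ω : Type*} [MeasurableSpace Ω] (P : Measure Ω)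
    (V : ℕ → Ω → ℝ × ℝ) (s : ℝ) : ℝ :=
  ∫ ω, Real.exp (-(s * (V 0 ω).1)) ∂P

/-- `a(t) = ∫_0^t μ̃₁(z) q(t−z) λ(t−z) dz`. -/
def aFun {Ω : Type*} [MeasurableSpace Ω] (P : Measure Ω)
    (lam q : ℝ → ℝ) (V : ℕ → Ω → ℝ × ℝ) (t : ℝ) : ℝ :=
  ∫ z in (0:ℝ)..t, laplace1 P V z * q (t - z) * lam (t - z)

/-- `P_n(t,L) = E[ F_{G_t}(L − Σ_{i=1}^n V_i⁽²⁾) · Π_{i=1}^n q(Z_i) e^{−(t−Z_i)V_i⁽¹⁾} ]`,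
where the `Z_i` are i.i.d. with density `x ↦ (λ(x)/Λ(t)) 1_{[0,t]}(x)`, independent of the
`V_i`; this joint expectation is written out as the corresponding iterated integral. -/
def Pn {Ω : Type*} [MeasurableSpace Ω] (P : Measure Ω)
    (lam q : ℝ → ℝ) (Λt : ℝ) (V : ℕ → Ω → ℝ × ℝ) (FG : ℝ → ℝ)
    (t L : ℝ) (n : ℕ) : ℝ :=
  ∫ z : Fin n → ℝ in Set.univ.pi fun _ => Set.Icc (0:ℝ) t,
    (∫ ω, FG (L - ∑ i : Fin n, (V i.val ω).2)
        * ∏ i : Fin n, (q (z i) * Real.exp (-((t - z i) * (V i.val ω).1))) ∂P)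
      * ∏ i : Fin n, (lam (z i) / Λt)

end

/-!
Conditionally on the arrival times, `φ_t(L)` only involves the first `N_t` shock increments,
which are i.i.d. with law `μ` and independent of the arrival times. With `s_i = t - T_i ≥ 0` and
`F_{G_t}(a - y) = P(y ≤ a - G_t)`, it therefore suffices to compare
`E[exp (-∑ s_i V_i⁽¹⁾); ∑ V_i⁽²⁾ ≤ a]` (`laplaceCdf`) under `μ^⊗n` and `ν^⊗n`. This is done one
coordinate at a time: with the other coordinates frozen, one coordinate contributes
`E[exp (-s X); Y ≤ b]`, and the layer-cake identity `exp (-s x) = ∫_{u ≥ x} s exp (-s u) du`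
turns this into `∫ P(X ≤ u, Y ≤ b) s exp (-s u) du`, which is monotone in the lower orthant order.
-/

open Set ENNReal Real

def LowerOrthantLE (μ ν : Measure (ℝ × ℝ)) : Prop :=
  ∀ x₁ x₂ : ℝ, μ {p | p.1 ≤ x₁ ∧ p.2 ≤ x₂} ≤ ν {p | p.1 ≤ x₁ ∧ p.2 ≤ x₂}

theorem lowerOrthantLE_map_iff {Ω : Type*} [MeasurableSpace Ω] {P : Measure Ω}
    {X Y : Ω → ℝ × ℝ} (hX : Measurable X) (hY : Measurable Y) :
    LowerOrthantLE (P.map X) (P.map Y) ↔ ∀ x₁ x₂ : ℝ,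
      P {ω | (X ω).1 ≤ x₁ ∧ (X ω).2 ≤ x₂} ≤ P {ω | (Y ω).1 ≤ x₁ ∧ (Y ω).2 ≤ x₂} := by
  have hS : ∀ x₁ x₂ : ℝ, MeasurableSet {p : ℝ × ℝ | p.1 ≤ x₁ ∧ p.2 ≤ x₂} := fun x₁ x₂ =>
    (measurableSet_le measurable_fst measurable_const).inter
      (measurableSet_le measurable_snd measurable_const)
  simp only [LowerOrthantLE, Measure.map_apply hX (hS _ _), Measure.map_apply hY (hS _ _)]
  rfl

theorem LowerOrthantLE.measure_snd_le {μ ν : Measure (ℝ × ℝ)} (h : LowerOrthantLE μ ν)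
    (b : ℝ) : μ {p | p.2 ≤ b} ≤ ν {p | p.2 ≤ b} := by
  have hmono : Monotone fun k : ℕ => {p : ℝ × ℝ | p.1 ≤ k ∧ p.2 ≤ b} :=
    fun i j hij p hp => ⟨hp.1.trans (by exact_mod_cast hij), hp.2⟩
  have hU : {p : ℝ × ℝ | p.2 ≤ b} = ⋃ k : ℕ, {p : ℝ × ℝ | p.1 ≤ k ∧ p.2 ≤ b} := by
    ext p
    simpa using fun _ => exists_nat_ge p.1
  rw [hU, hmono.measure_iUnion, hmono.measure_iUnion]
  exact iSup_mono fun k => h k b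

theorem lintegral_Ici_mul_exp_neg_mul {s : ℝ} (hs : 0 < s) (x : ℝ) :
    ∫⁻ u in Ici x, ENNReal.ofReal (s * exp (-(s * u))) = ENNReal.ofReal (exp (-(s * x))) := by
  have hint : IntegrableOn (fun u => s * exp (-(s * u))) (Ioi x) := by
    have := (exp_neg_integrableOn_Ioi x hs).const_mul s
    simp only [neg_mul] at this
    exact this
  have hexp := integral_comp_mul_left_Ioi (fun u => exp (-u)) x hs
  simp only [smul_eq_mul, integral_exp_neg_Ioi] at hexp
  rw [← setLIntegral_congr Ioi_ae_eq_Ici,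
    ← ofReal_integral_eq_lintegral_ofReal hint (ae_of_all _ fun u => by positivity),
    integral_const_mul, hexp]
  field_simp

theorem setLIntegral_exp_neg_mul_eq_lintegral_orthant (ρ : Measure (ℝ × ℝ)) [SFinite ρ]
    {s : ℝ} (hs : 0 < s) (b : ℝ) :
    ∫⁻ p in {p | p.2 ≤ b}, ENNReal.ofReal (exp (-(s * p.1))) ∂ρ
      = ∫⁻ u, ρ {p | p.1 ≤ u ∧ p.2 ≤ b} * ENNReal.ofReal (s * exp (-(s * u))) := by
  set S := {p : ℝ × ℝ | p.2 ≤ b}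
  have hS : MeasurableSet S := measurableSet_le measurable_snd measurable_const
  let f : ℝ × ℝ → ℝ → ℝ≥0∞ := fun p u =>
    if p.1 ≤ u then ENNReal.ofReal (s * exp (-(s * u))) else 0
  have hf : Measurable (Function.uncurry f) :=
    Measurable.ite (measurableSet_le (by fun_prop) (by fun_prop)) (by fun_prop) measurable_const
  calc _ = ∫⁻ p in S, ∫⁻ u, f p u ∂volume ∂ρ := by
        refine setLIntegral_congr_fun hS fun p _ => ?_
        rw [← lintegral_Ici_mul_exp_neg_mul hs, ← lintegral_indicator measurableSet_Ici]
        rfl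
    _ = ∫⁻ u, ∫⁻ p in S, f p u ∂ρ ∂volume := lintegral_lintegral_swap hf.aemeasurable
    _ = _ := by
        congr with u
        have hu : MeasurableSet {p : ℝ × ℝ | p.1 ≤ u} :=
          measurableSet_le measurable_fst measurable_const
        rw [mul_comm, show {p : ℝ × ℝ | p.1 ≤ u ∧ p.2 ≤ b} = {p | p.1 ≤ u} ∩ S from rfl,
          ← Measure.restrict_apply hu, ← lintegral_indicator_const hu]
        rfl

theorem LowerOrthantLE.setLIntegral_exp_neg_mul_le {μ ν : Measure (ℝ × ℝ)}
    (h : LowerOrthantLE μ ν) [SFinite μ] [SFinite ν] {s : ℝ} (hs : 0 ≤ s) (b : ℝ) :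
    ∫⁻ p in {p | p.2 ≤ b}, ENNReal.ofReal (exp (-(s * p.1))) ∂μ
      ≤ ∫⁻ p in {p | p.2 ≤ b}, ENNReal.ofReal (exp (-(s * p.1))) ∂ν := by
  rcases hs.eq_or_lt with rfl | hs
  · simpa only [zero_mul, neg_zero, exp_zero, ofReal_one, setLIntegral_one]
      using h.measure_snd_le b
  · rw [setLIntegral_exp_neg_mul_eq_lintegral_orthant μ hs,
      setLIntegral_exp_neg_mul_eq_lintegral_orthant ν hs]
    exact lintegral_mono fun u => mul_le_mul_left (h u b) _

theorem lintegral_exp_neg_mul_mul_setLIntegral_eq (ξ : Measure (ℝ × ℝ)) [SFinite ξ]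
    {Y : Type*} [MeasurableSpace Y] (ρ : Measure Y) [SFinite ρ] {c : Y → ℝ} (hc : Measurable c)
    {w : Y → ℝ≥0∞} (hw : Measurable w) (s : ℝ) :
    ∫⁻ p, ENNReal.ofReal (exp (-(s * p.1))) * ∫⁻ y in {y | p.2 ≤ c y}, w y ∂ρ ∂ξ
      = ∫⁻ y, w y * ∫⁻ p in {p | p.2 ≤ c y}, ENNReal.ofReal (exp (-(s * p.1))) ∂ξ ∂ρ := by
  let F : ℝ × ℝ → Y → ℝ≥0∞ := fun p y =>
    if p.2 ≤ c y then ENNReal.ofReal (exp (-(s * p.1))) * w y else 0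
  have hF : Measurable (Function.uncurry F) :=
    Measurable.ite (measurableSet_le (by fun_prop) (by fun_prop)) (by fun_prop) measurable_const
  calc _ = ∫⁻ p, ∫⁻ y, F p y ∂ρ ∂ξ := by
        congr with p
        have hA : MeasurableSet {y | p.2 ≤ c y} := measurableSet_le measurable_const hc
        rw [← lintegral_indicator hA, ← lintegral_const_mul _ (hw.indicator hA)]
        congr with y
        by_cases hy : p.2 ≤ c y <;> simp [F, hy]
    _ = ∫⁻ y, ∫⁻ p, F p y ∂ξ ∂ρ := lintegral_lintegral_swap hF.aemeasurable
    _ = _ := by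
        congr with y
        have hA : MeasurableSet {p : ℝ × ℝ | p.2 ≤ c y} :=
          measurableSet_le measurable_snd measurable_const
        rw [← lintegral_indicator hA, ← lintegral_const_mul _ ((by fun_prop : Measurable
          fun p : ℝ × ℝ => ENNReal.ofReal (exp (-(s * p.1)))).indicator hA)]
        congr with p
        by_cases hp : p.2 ≤ c y <;> simp [F, hp, mul_comm]

theorem LowerOrthantLE.lintegral_exp_neg_mul_mul_setLIntegral_le {μ ν : Measure (ℝ × ℝ)}
    (h : LowerOrthantLE μ ν) [SFinite μ] [SFinite ν] {Y : Type*} [MeasurableSpace Y]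
    (ρ : Measure Y) [SFinite ρ] {c : Y → ℝ} (hc : Measurable c) {w : Y → ℝ≥0∞}
    (hw : Measurable w) {s : ℝ} (hs : 0 ≤ s) :
    ∫⁻ p, ENNReal.ofReal (exp (-(s * p.1))) * ∫⁻ y in {y | p.2 ≤ c y}, w y ∂ρ ∂μ
      ≤ ∫⁻ p, ENNReal.ofReal (exp (-(s * p.1))) * ∫⁻ y in {y | p.2 ≤ c y}, w y ∂ρ ∂ν := by
  rw [lintegral_exp_neg_mul_mul_setLIntegral_eq μ ρ hc hw,
    lintegral_exp_neg_mul_mul_setLIntegral_eq ν ρ hc hw]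
  exact lintegral_mono fun y => mul_le_mul_right (h.setLIntegral_exp_neg_mul_le hs (c y)) _

noncomputable def laplaceCdf (μ : Measure (ℝ × ℝ)) (n : ℕ) (s : Fin n → ℝ) (a : ℝ) : ℝ≥0∞ :=
  ∫⁻ x in {x : Fin n → ℝ × ℝ | ∑ i, (x i).2 ≤ a}, ENNReal.ofReal (exp (-∑ i, s i * (x i).1))
    ∂Measure.pi fun _ => μ

theorem measurable_laplaceCdf_integrand {n : ℕ} (s : Fin n → ℝ) (a : ℝ) :
    Measurable ({x : Fin n → ℝ × ℝ | ∑ i, (x i).2 ≤ a}.indicator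
      fun x => ENNReal.ofReal (exp (-∑ i, s i * (x i).1))) :=
  Measurable.indicator (by fun_prop) (measurableSet_le (by fun_prop) measurable_const)

theorem laplaceCdf_succ (μ : Measure (ℝ × ℝ)) [SigmaFinite μ] {n : ℕ} (s : Fin (n + 1) → ℝ)
    (a : ℝ) :
    laplaceCdf μ (n + 1) s a
      = ∫⁻ p, ENNReal.ofReal (exp (-(s 0 * p.1))) * laplaceCdf μ n (Fin.tail s) (a - p.2) ∂μ := by
  let e := MeasurableEquiv.piFinSuccAbove (fun _ : Fin (n + 1) => ℝ × ℝ) 0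
  have he : ∀ p y, e.symm (p, y) = Fin.cons p y := fun p y => by simp [e, Fin.consEquiv]
  rw [laplaceCdf, ← lintegral_indicator (measurableSet_le (by fun_prop) measurable_const),
    ← ((measurePreserving_piFinSuccAbove (fun _ => μ) 0).symm e).lintegral_comp_emb
      e.symm.measurableEmbedding, lintegral_prod]
  swap
  · exact ((measurable_laplaceCdf_integrand s a).comp e.symm.measurable).aemeasurable
  congr with p
  rw [laplaceCdf, ← lintegral_indicator (measurableSet_le (by fun_prop) measurable_const),
    ← lintegral_const_mul _ (measurable_laplaceCdf_integrand _ _)]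
  congr with y
  simp only [he, Fin.sum_univ_succ, Fin.cons_zero, Fin.cons_succ, Set.indicator_apply,
    Set.mem_ofPred_eq, le_sub_iff_add_le', neg_add, exp_add, Fin.tail]
  split_ifs <;> simp [ENNReal.ofReal_mul (exp_pos _).le]

theorem LowerOrthantLE.laplaceCdf_le {μ ν : Measure (ℝ × ℝ)} (h : LowerOrthantLE μ ν)
    [SigmaFinite μ] [SigmaFinite ν] {n : ℕ} (s : Fin n → ℝ) (hs : 0 ≤ s) (a : ℝ) :
    laplaceCdf μ n s a ≤ laplaceCdf ν n s a := by
  induction n generalizing a with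
  | zero =>
    unfold laplaceCdf
    rw [Subsingleton.elim (fun _ : Fin 0 => μ) fun _ => ν]
  | succ n ih =>
    have hν : ∀ b, laplaceCdf ν n (Fin.tail s) (a - b) = ∫⁻ y in {y | b ≤ a - ∑ i, (y i).2},
        ENNReal.ofReal (exp (-∑ i, Fin.tail s i * (y i).1)) ∂Measure.pi fun _ => ν := by
      simp only [laplaceCdf, le_sub_comm, implies_true]
    calc laplaceCdf μ (n + 1) s a
        = ∫⁻ p, ENNReal.ofReal (exp (-(s 0 * p.1))) * laplaceCdf μ n (Fin.tail s) (a - p.2) ∂μ :=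
          laplaceCdf_succ μ s a
      _ ≤ ∫⁻ p, ENNReal.ofReal (exp (-(s 0 * p.1))) * laplaceCdf ν n (Fin.tail s) (a - p.2) ∂μ :=
          lintegral_mono fun p => mul_le_mul_right (ih _ (fun i => hs i.succ) _) _
      _ ≤ ∫⁻ p, ENNReal.ofReal (exp (-(s 0 * p.1))) * laplaceCdf ν n (Fin.tail s) (a - p.2) ∂ν := by
          simp only [hν]
          exact h.lintegral_exp_neg_mul_mul_setLIntegral_le _ (by fun_prop) (by fun_prop) (hs 0)
      _ = laplaceCdf ν (n + 1) s a := (laplaceCdf_succ ν s a).symm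

theorem lintegral_measure_Iic_mul_exp_eq (ξ : Measure (ℝ × ℝ)) [SigmaFinite ξ] (κ : Measure ℝ)
    [SFinite κ] {n : ℕ} (s : Fin n → ℝ) (a : ℝ) :
    ∫⁻ x, κ (Iic (a - ∑ i, (x i).2)) * ENNReal.ofReal (exp (-∑ i, s i * (x i).1))
        ∂(Measure.pi fun _ => ξ)
      = ∫⁻ c, laplaceCdf ξ n s (a - c) ∂κ := by
  let F : (Fin n → ℝ × ℝ) → ℝ → ℝ≥0∞ := fun x c =>
    {x : Fin n → ℝ × ℝ | ∑ i, (x i).2 ≤ a - c}.indicator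
      (fun x => ENNReal.ofReal (exp (-∑ i, s i * (x i).1))) x
  have hF : Measurable (Function.uncurry F) :=
    Measurable.indicator (by fun_prop) (measurableSet_le (by fun_prop) (by fun_prop))
  calc _ = ∫⁻ x, ∫⁻ c, F x c ∂κ ∂(Measure.pi fun _ => ξ) := by
        congr with x
        rw [← lintegral_indicator_one measurableSet_Iic,
          ← lintegral_mul_const _ (measurable_one.indicator measurableSet_Iic)]
        congr with c
        by_cases hc : c ≤ a - ∑ i, (x i).2 <;> simp [F, hc, le_sub_comm]
    _ = ∫⁻ c, ∫⁻ x, F x c ∂(Measure.pi fun _ => ξ) ∂κ := lintegral_lintegral_swap hF.aemeasurable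
    _ = _ := by
        congr with c
        rw [laplaceCdf, ← lintegral_indicator (measurableSet_le (by fun_prop) measurable_const)]

theorem LowerOrthantLE.lintegral_measure_Iic_mul_exp_le {μ ν : Measure (ℝ × ℝ)}
    (h : LowerOrthantLE μ ν) [SigmaFinite μ] [SigmaFinite ν] (κ : Measure ℝ) [SFinite κ]
    {n : ℕ} (s : Fin n → ℝ) (hs : 0 ≤ s) (a : ℝ) :
    ∫⁻ x, κ (Iic (a - ∑ i, (x i).2)) * ENNReal.ofReal (exp (-∑ i, s i * (x i).1))
        ∂(Measure.pi fun _ => μ)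
      ≤ ∫⁻ x, κ (Iic (a - ∑ i, (x i).2)) * ENNReal.ofReal (exp (-∑ i, s i * (x i).1))
        ∂(Measure.pi fun _ => ν) := by
  rw [lintegral_measure_Iic_mul_exp_eq, lintegral_measure_Iic_mul_exp_eq]
  exact lintegral_mono fun c => h.laplaceCdf_le s hs (a - c)

theorem lintegral_comp_fin_infinitePi {E : Type*} [MeasurableSpace E] (μ : Measure E)
    [IsProbabilityMeasure μ] (n : ℕ) {g : (Fin n → E) → ℝ≥0∞} (hg : Measurable g) :
    ∫⁻ v, g (fun i => v i) ∂Measure.infinitePi (fun _ : ℕ => μ)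
      = ∫⁻ x, g x ∂Measure.pi fun _ => μ := by
  have hmap : (Measure.infinitePi fun _ : ℕ => μ).map (fun v (i : Fin n) => v i)
      = Measure.pi fun _ => μ := by
    rw [Measure.map_infinitePi_infinitePi_of_inj Fin.val_injective, Measure.infinitePi_eq_pi]
  rw [← hmap, lintegral_map hg (by fun_prop)]

theorem ProbabilityTheory.IndepFun.lintegral_comp_eq {Ω α β : Type*} [MeasurableSpace Ω]
    [MeasurableSpace α] [MeasurableSpace β] {P : Measure Ω} [IsFiniteMeasure P] {X : Ω → α}
    {Y : Ω → β} (hXY : IndepFun X Y P) (hX : Measurable X) (hY : Measurable Y)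
    {f : α × β → ℝ≥0∞} (hf : Measurable f) :
    ∫⁻ ω, f (X ω, Y ω) ∂P = ∫⁻ y, ∫⁻ x, f (x, y) ∂P.map X ∂P.map Y := by
  rw [← lintegral_map hf (hX.prodMk hY),
    (indepFun_iff_map_prod_eq_prod_map_map hX.aemeasurable hY.aemeasurable).1 hXY,
    lintegral_prod_symm _ hf.aemeasurable]

theorem cdfRV_eq_cdf_map {Ω : Type*} [MeasurableSpace Ω] (P : Measure Ω)
    [IsProbabilityMeasure P] {X : Ω → ℝ} (hX : Measurable X) :
    cdfRV P X = cdf (P.map X) := by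
  have := Measure.isProbabilityMeasure_map hX.aemeasurable (μ := P)
  ext x
  rw [cdf_eq_real, measureReal_def, Measure.map_apply hX measurableSet_Iic]
  rfl

noncomputable def arrivalCount (t : ℝ) (τ : ℕ → ℝ) : ℕ :=
  {i | τ i ≤ t}.ncard

theorem measurable_arrivalCount (t : ℝ) : Measurable (arrivalCount t) :=
  measurable_ncard.comp (by fun_prop)

theorem le_of_lt_arrivalCount {t : ℝ} {τ : ℕ → ℝ} (hτ : Monotone τ) {i : ℕ}
    (hi : i < arrivalCount t τ) : τ i ≤ t := by
  by_contra! hti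
  have hsub : {j | τ j ≤ t} ⊆ Iio i := fun j hj =>
    lt_of_not_ge fun hij => (hti.trans_le (hτ hij)).not_ge hj
  exact hi.not_ge ((ncard_le_ncard hsub (finite_Iio i)).trans (ncard_Iio_nat i).le)

noncomputable def shockIntegrand (F q : ℝ → ℝ) (t L : ℝ) (τ : ℕ → ℝ) (v : ℕ → ℝ × ℝ) : ℝ :=
  F (L - ∑ i ∈ Finset.range (arrivalCount t τ), (v i).2)
    * exp (-∑ i ∈ Finset.range (arrivalCount t τ), (v i).1 * (t - τ i))
    * ∏ i ∈ Finset.range (arrivalCount t τ), q (τ i)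

theorem phi_eq_integral_shockIntegrand {Ω : Type*} [MeasurableSpace Ω] (P : Measure Ω)
    (T : ℕ → Ω → ℝ) (V : ℕ → Ω → ℝ × ℝ) (q : ℝ → ℝ) (G : ℝ → Ω → ℝ) (t L : ℝ) :
    phi P T V q G t L
      = ∫ ω, shockIntegrand (cdfRV P (G t)) q t L (fun i => T i ω) (fun i => V i ω) ∂P :=
  rfl

theorem measurable_shockIntegrand {F q : ℝ → ℝ} (hF : Measurable F) (hq : Measurable q)
    (t L : ℝ) : Measurable fun z : (ℕ → ℝ) × (ℕ → ℝ × ℝ) => shockIntegrand F q t L z.1 z.2 := by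
  have hg : Measurable fun w : ((ℕ → ℝ) × (ℕ → ℝ × ℝ)) × ℕ =>
      F (L - ∑ i ∈ Finset.range w.2, (w.1.2 i).2)
        * exp (-∑ i ∈ Finset.range w.2, (w.1.2 i).1 * (t - w.1.1 i))
        * ∏ i ∈ Finset.range w.2, q (w.1.1 i) :=
    measurable_from_prod_countable_left fun n => by dsimp only; fun_prop
  have hc : Measurable fun z : (ℕ → ℝ) × (ℕ → ℝ × ℝ) => (z, arrivalCount t z.1) :=
    measurable_id.prodMk ((measurable_arrivalCount t).comp measurable_fst)
  simpa only [Function.comp_def, shockIntegrand] using hg.comp hc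

theorem shockIntegrand_nonneg {F q : ℝ → ℝ} (hF : 0 ≤ F) (hq : 0 ≤ q) (t L : ℝ)
    (τ : ℕ → ℝ) (v : ℕ → ℝ × ℝ) : 0 ≤ shockIntegrand F q t L τ v :=
  mul_nonneg (mul_nonneg (hF _) (exp_pos _).le) (Finset.prod_nonneg fun _ _ => hq _)

theorem shockIntegrand_le_one {F q : ℝ → ℝ} (hF : F ≤ 1) (hq : 0 ≤ q) (hq₁ : q ≤ 1) (t L : ℝ)
    {τ : ℕ → ℝ} (hτ : Monotone τ) {v : ℕ → ℝ × ℝ} (hv : ∀ i, 0 ≤ (v i).1) :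
    shockIntegrand F q t L τ v ≤ 1 := by
  have hexp : exp (-∑ i ∈ Finset.range (arrivalCount t τ), (v i).1 * (t - τ i)) ≤ 1 := by
    refine exp_le_one_iff.2 (neg_nonpos.2 (Finset.sum_nonneg fun i hi => ?_))
    exact mul_nonneg (hv i) (sub_nonneg.2 (le_of_lt_arrivalCount hτ (Finset.mem_range.1 hi)))
  exact mul_le_one₀ (mul_le_one₀ (hF _) (exp_pos _).le hexp)
    (Finset.prod_nonneg fun _ _ => hq _) (Finset.prod_le_one (fun _ _ => hq _) fun _ _ => hq₁ _)

theorem LowerOrthantLE.lintegral_shockIntegrand_le {μ ν : Measure (ℝ × ℝ)}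
    (h : LowerOrthantLE μ ν) [IsProbabilityMeasure μ] [IsProbabilityMeasure ν]
    (κ : Measure ℝ) [IsProbabilityMeasure κ] (q : ℝ → ℝ) (t L : ℝ) {τ : ℕ → ℝ}
    (hτ : Monotone τ) :
    ∫⁻ v, ENNReal.ofReal (shockIntegrand (cdf κ) q t L τ v) ∂Measure.infinitePi (fun _ => μ)
      ≤ ∫⁻ v, ENNReal.ofReal (shockIntegrand (cdf κ) q t L τ v)
        ∂Measure.infinitePi (fun _ => ν) := by
  set n := arrivalCount t τ
  let s : Fin n → ℝ := fun i => t - τ i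
  have hs : 0 ≤ s := fun i => sub_nonneg.2 (le_of_lt_arrivalCount hτ i.isLt)
  let g : (Fin n → ℝ × ℝ) → ℝ≥0∞ := fun x =>
    κ (Iic (L - ∑ i, (x i).2)) * ENNReal.ofReal (exp (-∑ i, s i * (x i).1))
  have hκ : Measurable fun x => κ (Iic x) :=
    Monotone.measurable fun a b hab => measure_mono (Iic_subset_Iic.2 hab)
  have hg : Measurable g := (hκ.comp (by fun_prop)).mul (by fun_prop)
  have hfac : ∀ v : ℕ → ℝ × ℝ, ENNReal.ofReal (shockIntegrand (cdf κ) q t L τ v)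
      = ENNReal.ofReal (∏ i ∈ Finset.range n, q (τ i)) * g fun i => v i := by
    intro v
    rw [shockIntegrand, ENNReal.ofReal_mul (mul_nonneg (cdf_nonneg _ _) (exp_pos _).le),
      ENNReal.ofReal_mul (cdf_nonneg _ _), ofReal_cdf, mul_comm]
    simp only [g, s, Fin.sum_univ_eq_sum_range (fun i => (v i).2),
      Fin.sum_univ_eq_sum_range (fun i => (t - τ i) * (v i).1), mul_comm (v _).1]
    rfl
  simp only [hfac]
  rw [lintegral_const_mul' _ _ ofReal_ne_top, lintegral_const_mul' _ _ ofReal_ne_top,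
    lintegral_comp_fin_infinitePi _ _ hg, lintegral_comp_fin_infinitePi _ _ hg]
  exact mul_le_mul_right (h.lintegral_measure_Iic_mul_exp_le κ s hs L) _

namespace ShockModel

variable {Ω : Type*} [MeasurableSpace Ω] {P : Measure Ω} {lam Λ : ℝ → ℝ} {T : ℕ → Ω → ℝ}
  {V : ℕ → Ω → ℝ × ℝ} {μ : Measure (ℝ × ℝ)} {q : ℝ → ℝ} {G : ℝ → Ω → ℝ}

theorem isProbabilityMeasure_law (hm : ShockModel P lam Λ T V μ q G) :
    IsProbabilityMeasure μ := by
  have := hm.prob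
  rw [← hm.V_law 0]
  exact Measure.isProbabilityMeasure_map (hm.V_meas 0).aemeasurable

theorem map_increments_eq_infinitePi (hm : ShockModel P lam Λ T V μ q G) :
    P.map (fun ω i => V i ω) = Measure.infinitePi fun _ => μ := by
  rw [hm.V_iIndep.map_fun_eq_infinitePi_map hm.V_meas]
  simp_rw [hm.V_law]

theorem ae_monotone_map_arrivalTimes (hm : ShockModel P lam Λ T V μ q G) :
    ∀ᵐ τ ∂P.map (fun ω i => T i ω), Monotone τ := by
  have hmono : MeasurableSet {τ : ℕ → ℝ | Monotone τ} :=
    measurableSet_setOfPred.2 (by unfold Monotone; fun_prop)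
  rw [ae_map_iff (measurable_pi_lambda _ hm.poisson.meas).aemeasurable hmono]
  exact hm.poisson.strictMono.mono fun ω h => h.monotone

theorem phi_eq_toReal_lintegral (hm : ShockModel P lam Λ T V μ q G) (t L : ℝ) :
    phi P T V q G t L = (∫⁻ ω, ENNReal.ofReal (shockIntegrand (cdf (P.map (G t))) q t L
      (fun i => T i ω) (fun i => V i ω)) ∂P).toReal := by
  have := hm.prob
  rw [phi_eq_integral_shockIntegrand, cdfRV_eq_cdf_map P (hm.G_meas t)]
  refine integral_eq_lintegral_of_nonneg_ae
    (ae_of_all _ fun ω => shockIntegrand_nonneg (cdf_nonneg _) (fun x => (hm.q_mem x).1) ..) ?_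
  exact ((measurable_shockIntegrand (cdf _).mono.measurable hm.q_meas t L).comp
    ((measurable_pi_lambda _ hm.poisson.meas).prodMk
      (measurable_pi_lambda _ hm.V_meas))).aestronglyMeasurable

theorem lintegral_shockIntegrand_eq (hm : ShockModel P lam Λ T V μ q G) {F : ℝ → ℝ}
    (hF : Measurable F) (t L : ℝ) :
    ∫⁻ ω, ENNReal.ofReal (shockIntegrand F q t L (fun i => T i ω) (fun i => V i ω)) ∂P
      = ∫⁻ τ, ∫⁻ v, ENNReal.ofReal (shockIntegrand F q t L τ v)
          ∂Measure.infinitePi (fun _ => μ) ∂P.map (fun ω i => T i ω) := by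
  have := hm.prob
  have hf : Measurable fun z : (ℕ → ℝ × ℝ) × (ℕ → ℝ) =>
      ENNReal.ofReal (shockIntegrand F q t L z.2 z.1) :=
    ((measurable_shockIntegrand hF hm.q_meas t L).comp measurable_swap).ennreal_ofReal
  rw [← hm.map_increments_eq_infinitePi]
  exact hm.V_T_indep.lintegral_comp_eq (measurable_pi_lambda _ hm.V_meas)
    (measurable_pi_lambda _ hm.poisson.meas) hf

theorem lintegral_shockIntegrand_le_one (hm : ShockModel P lam Λ T V μ q G) {F : ℝ → ℝ}
    (hF : F ≤ 1) (t L : ℝ) :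
    ∫⁻ ω, ENNReal.ofReal (shockIntegrand F q t L (fun i => T i ω) (fun i => V i ω)) ∂P ≤ 1 := by
  have := hm.prob
  calc _ ≤ ∫⁻ _, 1 ∂P := lintegral_mono_ae ?_
    _ = 1 := by simp
  filter_upwards [hm.poisson.strictMono, ae_all_iff.2 hm.V_nonneg] with ω hT hV
  exact ofReal_le_one.2 (shockIntegrand_le_one hF (fun x => (hm.q_mem x).1)
    (fun x => (hm.q_mem x).2) t L hT.monotone fun i => (hV i).1)

end ShockModel

theorem phi_mono_in_lower_orthant_general {Ω : Type*} [MeasurableSpace Ω] (P : Measure Ω)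
    (lam Λ : ℝ → ℝ) (T : ℕ → Ω → ℝ) (V W : ℕ → Ω → ℝ × ℝ)
    (μ ν : Measure (ℝ × ℝ)) (q : ℝ → ℝ) (G : ℝ → Ω → ℝ)
    (hmodel : ShockModel P lam Λ T V μ q G)
    (hmodelt : ShockModel P lam Λ T W ν q G)
    (h_lo : ∀ x₁ x₂ : ℝ,
      P {ω | (V 0 ω).1 ≤ x₁ ∧ (V 0 ω).2 ≤ x₂} ≤ P {ω | (W 0 ω).1 ≤ x₁ ∧ (W 0 ω).2 ≤ x₂})
    (H : ℝ → ℝ) :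
    ∀ t L : ℝ, 0 ≤ t → 0 ≤ L →
      phi P T V q G t L ≤ phi P T W q G t L
      ∧ Real.exp (-(H t)) * phi P T V q G t L
          ≤ Real.exp (-(H t)) * phi P T W q G t L := by
  intro t L _ _
  have := hmodel.prob
  have := hmodel.isProbabilityMeasure_law
  have := hmodelt.isProbabilityMeasure_law
  have := Measure.isProbabilityMeasure_map (hmodel.G_meas t).aemeasurable (μ := P)
  have hlo : LowerOrthantLE μ ν := by
    rw [← hmodel.V_law 0, ← hmodelt.V_law 0]
    exact (lowerOrthantLE_map_iff (hmodel.V_meas 0) (hmodelt.V_meas 0)).2 h_lo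
  have hphi : phi P T V q G t L ≤ phi P T W q G t L := by
    rw [hmodel.phi_eq_toReal_lintegral, hmodelt.phi_eq_toReal_lintegral]
    refine ENNReal.toReal_mono
      ((hmodelt.lintegral_shockIntegrand_le_one (cdf_le_one _) t L).trans_lt one_lt_top).ne ?_
    rw [hmodel.lintegral_shockIntegrand_eq (cdf _).mono.measurable,
      hmodelt.lintegral_shockIntegrand_eq (cdf _).mono.measurable]
    refine lintegral_mono_ae ?_
    filter_upwards [hmodel.ae_monotone_map_arrivalTimes] with τ hτ
    exact hlo.lintegral_shockIntegrand_le _ q t L hτ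
  exact ⟨hphi, mul_le_mul_of_nonneg_left hphi (exp_pos _).le⟩

/-- influence of the dependence between `V⁽¹⁾` and `V⁽²⁾`:
if the generic shock increment `(V⁽¹⁾, V⁽²⁾)` is smaller than `(Ṽ⁽¹⁾, Ṽ⁽²⁾)` in the
lower orthant order (equivalently, in the upper orthant survival form), then
`φ_t(L) ≤ φ̃_t(L)` for all `t ≥ 0` and `L ≥ 0`; consequently the corresponding
lifetimes satisfy `τ ≤_st τ̃`, i.e. `e^{−H(t)} φ_t(L) ≤ e^{−H(t)} φ̃_t(L)` for all `t`. -/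
theorem phi_mono_in_lower_orthant {Ω : Type*} [MeasurableSpace Ω] (P : Measure Ω)
    (lam Λ : ℝ → ℝ) (T : ℕ → Ω → ℝ) (V W : ℕ → Ω → ℝ × ℝ)
    (μ ν : Measure (ℝ × ℝ)) (q : ℝ → ℝ) (G : ℝ → Ω → ℝ)
    (hmodel : ShockModel P lam Λ T V μ q G)
    (hmodelt : ShockModel P lam Λ T W ν q G)
    (h_lo : ∀ x₁ x₂ : ℝ,
      P {ω | (V 0 ω).1 ≤ x₁ ∧ (V 0 ω).2 ≤ x₂} ≤ P {ω | (W 0 ω).1 ≤ x₁ ∧ (W 0 ω).2 ≤ x₂})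
    (h_uo : ∀ x₁ x₂ : ℝ,
      P {ω | x₁ < (V 0 ω).1 ∧ x₂ < (V 0 ω).2} ≤ P {ω | x₁ < (W 0 ω).1 ∧ x₂ < (W 0 ω).2})
    (h H : ℝ → ℝ) (h_meas : Measurable h) (h_nonneg : ∀ x, 0 ≤ h x)
    (h_locInt : ∀ t : ℝ, 0 ≤ t → IntervalIntegrable h volume 0 t)
    (H_def : ∀ t : ℝ, H t = ∫ x in (0:ℝ)..t, h x) :
    ∀ t L : ℝ, 0 ≤ t → 0 ≤ L →
      phi P T V q G t L ≤ phi P T W q G t L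
      ∧ Real.exp (-(H t)) * phi P T V q G t L
          ≤ Real.exp (-(H t)) * phi P T W q G t L :=
  phi_mono_in_lower_orthant_general P lam Λ T V W μ ν q G hmodel hmodelt h_lo H
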